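/- Let φ be a 3-CNF formula and let G'_φ and O_φ be the graph and forbidden edge set constructed as follows: each variable x_i yields a path (x_i, x'_i, ¬x_i); each clause C_j with three literals yields a path (c_{j,1}, d_j, c_{j,2}, d'_j, c_{j,3}) (with two literals, a path (c_{j,1}, d_j, c_{j,2})); O_φ consists of the edges {literal-occurrence vertex, variable vertex} connecting clause gadgets to variable gadgets. Then φ is satisfiable if and only if G'_φ has a maximal matching M with M ∩ O_φ = ∅. -/

import Mathlib

open SimpleGraph

variable {V : Type*}

def IsMatchingF (G : SimpleGraph V) (M : Finset (Sym2 V)) : Prop :=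
  (∀ e ∈ M, e ∈ G.edgeSet) ∧
    ∀ e ∈ M, ∀ f ∈ M, e ≠ f → ∀ v : V, v ∈ e → v ∉ f

def IsMaximalMatchingF [DecidableEq V] (G : SimpleGraph V) (M : Finset (Sym2 V)) : Prop :=
  IsMatchingF G M ∧ ∀ e ∈ G.edgeSet, e ∉ M → ¬ IsMatchingF G (insert e M)

/-- `v` is unmatched by the matching `M`. -/
def Unmatched (M : Finset (Sym2 V)) (v : V) : Prop := ∀ e ∈ M, v ∉ e

/-- The graph `G[M₁ △ M₂]` on the symmetric difference of two edge sets. -/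
def sdGraph [DecidableEq V] (M₁ M₂ : Finset (Sym2 V)) : SimpleGraph V where
  Adj v w := v ≠ w ∧ s(v, w) ∈ (M₁ \ M₂) ∪ (M₂ \ M₁)
  symm := by
    constructor
    intro v w h
    exact ⟨h.1.symm, by rw [Sym2.eq_swap]; exact h.2⟩
  loopless := ⟨fun v h => h.1 rfl⟩

/-- The walk `p` is a path which is exactly a connected component of `H`
(it spans the component and uses all of its edges, and has at least one edge). -/
def IsPathComponent [DecidableEq V] (H : SimpleGraph V) {u w : V} (p : H.Walk u w) : Prop :=
  p.IsPath ∧ 1 ≤ p.length ∧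
    (∀ x : V, x ∈ p.support ↔ H.connectedComponentMk x = H.connectedComponentMk u) ∧
    (∀ a b : V, H.Adj a b → a ∈ p.support → s(a, b) ∈ p.edges)

/-- The closed walk `p` is a cycle which is exactly a connected component of `H`. -/
def IsCycleComponent [DecidableEq V] (H : SimpleGraph V) {u : V} (p : H.Walk u u) : Prop :=
  p.IsCycle ∧
    (∀ x : V, x ∈ p.support ↔ H.connectedComponentMk x = H.connectedComponentMk u) ∧
    (∀ a b : V, H.Adj a b → a ∈ p.support → s(a, b) ∈ p.edges)

/-- Vertex type for the SAT-reduction graph `G'_φ`: variable gadget vertices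
`(i, 0) = x_i`, `(i, 1) = x'_i`, `(i, 2) = ¬x_i`, and clause gadget vertices
`(j, 0) = c_{j,1}`, `(j, 1) = d_j`, `(j, 2) = c_{j,2}`, `(j, 3) = d'_j`, `(j, 4) = c_{j,3}`. -/
abbrev SatVertex (n m : ℕ) : Type := (Fin n × Fin 3) ⊕ (Fin m × Fin 5)

/-- Variable gadget edges: the path `(x_i, x'_i, ¬x_i)`. -/
def varEdges (n m : ℕ) : Set (Sym2 (SatVertex n m)) :=
  {e | ∃ i : Fin n,
    e = s(Sum.inl (i, 0), Sum.inl (i, 1)) ∨ e = s(Sum.inl (i, 1), Sum.inl (i, 2))}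

/-- Clause gadget edges: the path `(c_{j,1}, d_j, c_{j,2}, d'_j, c_{j,3})` for a clause
with three literals, and `(c_{j,1}, d_j, c_{j,2})` for a clause with two literals. -/
def clauseEdges {n m : ℕ} (φ : Fin m → List (Fin n × Bool)) : Set (Sym2 (SatVertex n m)) :=
  {e | ∃ (j : Fin m) (k : ℕ) (hk : k + 1 < 5),
    k < 2 * ((φ j).length - 1) ∧
    e = s(Sum.inr (j, ⟨k, by omega⟩), Sum.inr (j, ⟨k + 1, hk⟩))}

/-- The forbidden edges `O_φ`, connecting the `k`-th literal-occurrence vertex of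
clause `j` to the vertex of the corresponding literal in the variable gadget. -/
def connEdges {n m : ℕ} (φ : Fin m → List (Fin n × Bool)) : Set (Sym2 (SatVertex n m)) :=
  {e | ∃ (j : Fin m) (k : ℕ) (hk : 2 * k < 5) (hlen : k < (φ j).length),
    e = s(Sum.inr (j, ⟨2 * k, hk⟩),
          Sum.inl (((φ j).get ⟨k, hlen⟩).1,
            if ((φ j).get ⟨k, hlen⟩).2 then (0 : Fin 3) else 2))}

/-- The SAT-reduction graph `G'_φ`. -/
def satGraph {n m : ℕ} (φ : Fin m → List (Fin n × Bool)) : SimpleGraph (SatVertex n m) :=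
  SimpleGraph.fromEdgeSet (varEdges n m ∪ clauseEdges φ ∪ connEdges φ)


/-! A satisfying assignment `a` yields the matching that joins each `x'_i` to its true literal
vertex and, inside each clause gadget, perfectly matches the path with the occurrence vertex of
one true literal removed; every forbidden edge then meets a matched vertex, since an occurrence
vertex other than the removed one is matched and the removed one points to a true literal.

Conversely, no matching of a path `0 — 1 — ⋯ — 2N` covers all of its even vertices, so every
clause gadget has an unmatched occurrence vertex. By maximality the literal vertex at the other
end of its forbidden edge is matched, necessarily to `x'_i` since `M` avoids `O_φ`, so that
literal is true under the assignment `x_i := [x_i x'_i ∈ M]`. -/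

theorem IsMatchingF.eq_of_mem_of_mem {G : SimpleGraph V} {M : Finset (Sym2 V)}
    (hM : IsMatchingF G M) {e f : Sym2 V} (he : e ∈ M) (hf : f ∈ M) {v : V}
    (hve : v ∈ e) (hvf : v ∈ f) : e = f := by
  by_contra hne
  exact hM.2 e he f hf hne v hve hvf

theorem IsMatchingF.insert [DecidableEq V] {G : SimpleGraph V} {M : Finset (Sym2 V)}
    (hM : IsMatchingF G M) {e : Sym2 V} (he : e ∈ G.edgeSet) (hfree : ∀ v ∈ e, ∀ f ∈ M, v ∉ f) :
    IsMatchingF G (insert e M) := by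
  refine ⟨fun f hf => ?_, fun f hf g hg hfg v hvf hvg => ?_⟩
  · rcases Finset.mem_insert.1 hf with rfl | hf
    exacts [he, hM.1 f hf]
  · rcases Finset.mem_insert.1 hf with rfl | hfM <;> rcases Finset.mem_insert.1 hg with rfl | hgM
    · exact hfg rfl
    · exact hfree v hvf g hgM hvg
    · exact hfree v hvg f hfM hvf
    · exact hM.2 f hfM g hgM hfg v hvf hvg

theorem isMaximalMatchingF_iff [DecidableEq V] {G : SimpleGraph V} {M : Finset (Sym2 V)} :
    IsMaximalMatchingF G M ↔ IsMatchingF G M ∧ ∀ e ∈ G.edgeSet, ∃ v ∈ e, ∃ f ∈ M, v ∈ f := by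
  refine ⟨fun ⟨hM, hmax⟩ => ⟨hM, fun e he => ?_⟩, fun ⟨hM, hcov⟩ => ⟨hM, fun e he heM hins => ?_⟩⟩
  · by_cases heM : e ∈ M
    · induction e using Sym2.ind with
      | _ a b => exact ⟨a, Sym2.mem_mk_left a b, _, heM, Sym2.mem_mk_left a b⟩
    · by_contra! hfree
      exact hmax e he heM (hM.insert he hfree)
  · obtain ⟨v, hve, f, hf, hvf⟩ := hcov e he
    exact heM (hins.eq_of_mem_of_mem (Finset.mem_insert_self e M)
      (Finset.mem_insert_of_mem hf) hve hvf ▸ hf)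

section PathMatching

/-- A matching of the path `0 — 1 — ⋯ — 2N`, given by the set `P` of the smaller ends `t` of its
edges `{t, t + 1}`, leaves some even vertex unmatched. -/
theorem exists_even_unmatched_of_pathMatching {N : ℕ} {P : ℕ → Prop}
    (hlt : ∀ t, P t → t < 2 * N) (hmatch : ∀ t, P t → ¬ P (t + 1)) :
    ∃ k ≤ N, ∀ t, P t → t ≠ 2 * k ∧ t + 1 ≠ 2 * k := by
  by_contra! hcov
  have hP : ∀ k ≤ N, P (2 * k) := by
    intro k
    induction k with
    | zero =>
      intro hk
      obtain ⟨t, ht, hcov⟩ := hcov 0 hk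
      obtain rfl : t = 0 := by omega
      exact ht
    | succ k ih =>
      intro hk
      obtain ⟨t, ht, hcov⟩ := hcov (k + 1) hk
      obtain rfl | rfl : t = 2 * (k + 1) ∨ t = 2 * k + 1 := by omega
      · exact ht
      · exact absurd ht (hmatch _ (ih (by omega)))
  exact absurd (hlt _ (hP N le_rfl)) (lt_irrefl _)

/-- The perfect matching of the path `0 — 1 — ⋯ — 2N` with the vertex `2k` deleted, encoded as in
`exists_even_unmatched_of_pathMatching`. -/
def PathSkipMatching (N k t : ℕ) : Prop :=
  t < 2 * k ∧ t % 2 = 0 ∨ 2 * k < t ∧ t < 2 * N ∧ t % 2 = 1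

variable {N k t : ℕ}

theorem PathSkipMatching.lt (hkN : k ≤ N) (ht : PathSkipMatching N k t) : t < 2 * N := by
  unfold PathSkipMatching at ht
  omega

theorem PathSkipMatching.eq {t' c : ℕ} (ht : PathSkipMatching N k t)
    (ht' : PathSkipMatching N k t') (hc : c = t ∨ c = t + 1) (hc' : c = t' ∨ c = t' + 1) :
    t = t' := by
  unfold PathSkipMatching at ht ht'
  omega

theorem exists_pathSkipMatching_of_ne {c : ℕ} (hc : c ≤ 2 * N) (hck : c ≠ 2 * k) :
    ∃ t, PathSkipMatching N k t ∧ (c = t ∨ c = t + 1) := by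
  unfold PathSkipMatching
  by_cases h : c < 2 * k ↔ c % 2 = 0
  · exact ⟨c, by omega⟩
  · exact ⟨c - 1, by omega⟩

end PathMatching

section SatGraph

variable {n m : ℕ} {φ : Fin m → List (Fin n × Bool)}

def litVertex (l : Fin n × Bool) : SatVertex n m := Sum.inl (l.1, if l.2 then 0 else 2)

def varEdge (i : Fin n) (b : Bool) : Sym2 (SatVertex n m) := s(Sum.inl (i, 1), litVertex (i, b))

def clauseEdge (j : Fin m) (t : Fin 4) : Sym2 (SatVertex n m) :=
  s(Sum.inr (j, t.castSucc), Sum.inr (j, t.succ))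

variable {i i' : Fin n} {b : Bool} {j j' : Fin m} {t t' : Fin 4}

theorem litVertex_mem_varEdge_iff {l : Fin n × Bool} :
    (litVertex l : SatVertex n m) ∈ varEdge i b ↔ l = (i, b) := by
  obtain ⟨i', b'⟩ := l
  cases b <;> cases b' <;> simp [litVertex, varEdge, eq_comm]

theorem exists_eq_inl_of_mem_varEdge {v : SatVertex n m} (h : v ∈ varEdge i b) :
    ∃ c, v = Sum.inl (i, c) := by
  rcases Sym2.mem_iff.1 h with rfl | rfl
  exacts [⟨1, rfl⟩, ⟨_, rfl⟩]

theorem eq_of_inl_mem_varEdge {c : Fin 3} (h : (Sum.inl (i', c) : SatVertex n m) ∈ varEdge i b) :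
    i' = i := by
  rcases Sym2.mem_iff.1 h with h | h <;> simp_all [litVertex]

theorem inr_notMem_varEdge {c : Fin 5} : (Sum.inr (j, c) : SatVertex n m) ∉ varEdge i b := by
  simp [varEdge, litVertex]

theorem inl_notMem_clauseEdge {c : Fin 3} : (Sum.inl (i, c) : SatVertex n m) ∉ clauseEdge j t := by
  simp [clauseEdge]

theorem inr_mem_clauseEdge_iff {c : Fin 5} :
    (Sum.inr (j', c) : SatVertex n m) ∈ clauseEdge j t ↔
      j' = j ∧ ((c : ℕ) = t ∨ (c : ℕ) = t + 1) := by
  simp [clauseEdge, Fin.ext_iff, and_or_left]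

theorem varEdge_ne_clauseEdge : (varEdge i b : Sym2 (SatVertex n m)) ≠ clauseEdge j t := by
  simp [varEdge, clauseEdge]

theorem clauseEdge_inj : (clauseEdge j t : Sym2 (SatVertex n m)) = clauseEdge j' t' ↔
    j = j' ∧ t = t' := by
  refine ⟨fun h => ?_, by rintro ⟨rfl, rfl⟩; rfl⟩
  simp only [clauseEdge, Sym2.eq_iff, Sum.inr.injEq, Prod.mk.injEq, Fin.ext_iff,
    Fin.val_castSucc, Fin.val_succ] at h
  omega

theorem varEdge_notMem_connEdges : varEdge i b ∉ connEdges φ := by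
  rintro ⟨j, k, hk, hlen, h⟩
  simp [varEdge, litVertex] at h

theorem clauseEdge_notMem_connEdges : clauseEdge j t ∉ connEdges φ := by
  rintro ⟨j, k, hk, hlen, h⟩
  simp [clauseEdge] at h

theorem mem_edgeSet_satGraph_iff {e : Sym2 (SatVertex n m)} :
    e ∈ (satGraph φ).edgeSet ↔ (∃ i b, e = varEdge i b) ∨
      (∃ j, ∃ t : Fin 4, (t : ℕ) < 2 * ((φ j).length - 1) ∧ e = clauseEdge j t) ∨
        e ∈ connEdges φ := by
  have hloopless : ∀ e ∈ varEdges n m ∪ clauseEdges φ ∪ connEdges φ, e ∉ Sym2.diagSet := by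
    rintro _ ((⟨i, rfl | rfl⟩ | ⟨j, k, hk, hlt, rfl⟩) | ⟨j, k, hk, hlen, rfl⟩) <;>
      simp [Sym2.mk_isDiag_iff, Fin.ext_iff]
  rw [satGraph, edgeSet_fromEdgeSet, Set.mem_sdiff, and_iff_left_of_imp (hloopless e)]
  simp only [Set.mem_union, or_assoc]
  refine or_congr ⟨?_, ?_⟩ (or_congr ⟨?_, ?_⟩ Iff.rfl)
  · rintro ⟨i, rfl | rfl⟩
    exacts [⟨i, true, Sym2.eq_swap⟩, ⟨i, false, rfl⟩]
  · rintro ⟨i, (_ | _), rfl⟩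
    exacts [⟨i, Or.inr rfl⟩, ⟨i, Or.inl Sym2.eq_swap⟩]
  · rintro ⟨j, k, hk, hlt, rfl⟩
    exact ⟨j, ⟨k, by omega⟩, hlt, rfl⟩
  · rintro ⟨j, t, ht, rfl⟩
    exact ⟨j, t, by omega, ht, rfl⟩

theorem clauseEdge_mem_edgeSet_satGraph_iff :
    clauseEdge j t ∈ (satGraph φ).edgeSet ↔ (t : ℕ) < 2 * ((φ j).length - 1) := by
  rw [mem_edgeSet_satGraph_iff]
  refine ⟨?_, fun ht => Or.inr (Or.inl ⟨j, t, ht, rfl⟩)⟩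
  rintro (⟨i, b, h⟩ | ⟨j', t', ht', h⟩ | h)
  · exact absurd h.symm varEdge_ne_clauseEdge
  · obtain ⟨rfl, rfl⟩ := clauseEdge_inj.1 h
    exact ht'
  · exact absurd h clauseEdge_notMem_connEdges

theorem eq_varEdge_or_clauseEdge {e : Sym2 (SatVertex n m)} (he : e ∈ (satGraph φ).edgeSet)
    (hO : e ∉ connEdges φ) : (∃ i b, e = varEdge i b) ∨ ∃ j t, e = clauseEdge j t := by
  rcases mem_edgeSet_satGraph_iff.1 he with h | ⟨j, t, -, rfl⟩ | h
  exacts [Or.inl h, Or.inr ⟨j, t, rfl⟩, absurd h hO]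

open Classical in
/-- The matching built from an assignment `a`, leaving the `k j`-th occurrence vertex of each
clause `j` unmatched. -/
noncomputable def satMatching (φ : Fin m → List (Fin n × Bool)) (a : Fin n → Bool)
    (k : (j : Fin m) → Fin (φ j).length) : Finset (Sym2 (SatVertex n m)) :=
  Finset.univ.image (fun i => varEdge i (a i)) ∪
    Finset.univ.biUnion fun j =>
      (Finset.univ.filter fun t : Fin 4 => PathSkipMatching ((φ j).length - 1) (k j) t).image
        (clauseEdge j)

variable {a : Fin n → Bool} {k : (j : Fin m) → Fin (φ j).length}

theorem mem_satMatching {e : Sym2 (SatVertex n m)} :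
    e ∈ satMatching φ a k ↔ (∃ i, e = varEdge i (a i)) ∨
      ∃ j, ∃ t : Fin 4, PathSkipMatching ((φ j).length - 1) (k j) t ∧ e = clauseEdge j t := by
  simp [satMatching, eq_comm]

theorem isMatchingF_satMatching : IsMatchingF (satGraph φ) (satMatching φ a k) := by
  refine ⟨fun e he => ?_, fun e he f hf hne v hve hvf => hne ?_⟩
  · rcases mem_satMatching.1 he with ⟨i, rfl⟩ | ⟨j, t, ht, rfl⟩
    · exact mem_edgeSet_satGraph_iff.2 (Or.inl ⟨i, _, rfl⟩)
    · exact clauseEdge_mem_edgeSet_satGraph_iff.2 (ht.lt (Nat.le_sub_one_of_lt (k j).2))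
  · rcases mem_satMatching.1 he with ⟨i, rfl⟩ | ⟨j, t, ht, rfl⟩ <;>
      rcases mem_satMatching.1 hf with ⟨i', rfl⟩ | ⟨j', t', ht', rfl⟩
    · obtain ⟨c, rfl⟩ := exists_eq_inl_of_mem_varEdge hve
      rw [eq_of_inl_mem_varEdge hve, eq_of_inl_mem_varEdge hvf]
    · obtain ⟨c, rfl⟩ := exists_eq_inl_of_mem_varEdge hve
      exact absurd hvf inl_notMem_clauseEdge
    · obtain ⟨c, rfl⟩ := exists_eq_inl_of_mem_varEdge hvf
      exact absurd hve inl_notMem_clauseEdge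
    · rcases v with ⟨i₀, c⟩ | ⟨j₀, c⟩
      · exact absurd hve inl_notMem_clauseEdge
      · obtain ⟨rfl, hc⟩ := inr_mem_clauseEdge_iff.1 hve
        obtain ⟨rfl, hc'⟩ := inr_mem_clauseEdge_iff.1 hvf
        rw [Fin.ext (ht.eq ht' hc hc')]

theorem connEdges_notMem_satMatching : ∀ e ∈ connEdges φ, e ∉ satMatching φ a k := by
  intro e he hM
  rcases mem_satMatching.1 hM with ⟨i, rfl⟩ | ⟨j, t, -, rfl⟩
  exacts [varEdge_notMem_connEdges he, clauseEdge_notMem_connEdges he]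

theorem satMatching_covers (hφ : ∀ j, (φ j).length ≤ 3)
    (hk : ∀ j, a ((φ j).get (k j)).1 = ((φ j).get (k j)).2) :
    ∀ e ∈ (satGraph φ).edgeSet, ∃ v ∈ e, ∃ f ∈ satMatching φ a k, v ∈ f := by
  have hvar : ∀ i, ∀ v ∈ varEdge i (a i), ∃ f ∈ satMatching φ a k, v ∈ f :=
    fun i v hv => ⟨_, mem_satMatching.2 (Or.inl ⟨i, rfl⟩), hv⟩
  have hclause : ∀ j c (hc5 : c < 5), c ≤ 2 * ((φ j).length - 1) → c ≠ 2 * k j →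
      ∃ f ∈ satMatching φ a k, Sum.inr (j, ⟨c, hc5⟩) ∈ f := by
    intro j c _ hc hck
    obtain ⟨t, ht, hct⟩ := exists_pathSkipMatching_of_ne hc hck
    have ht4 : t < 4 := by
      have := ht.lt (Nat.le_sub_one_of_lt (k j).2)
      have := hφ j
      omega
    exact ⟨clauseEdge j ⟨t, ht4⟩, mem_satMatching.2 (Or.inr ⟨j, _, ht, rfl⟩),
      inr_mem_clauseEdge_iff.2 ⟨rfl, hct⟩⟩
  intro e he
  rcases mem_edgeSet_satGraph_iff.1 he with ⟨i, b, rfl⟩ | ⟨j, t, ht, rfl⟩ | ⟨j, k', hk', hlen, rfl⟩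
  · exact ⟨_, Sym2.mem_mk_left _ _, hvar i _ (Sym2.mem_mk_left _ _)⟩
  · by_cases htk : (t : ℕ) = 2 * k j
    · exact ⟨_, Sym2.mem_mk_right _ _, hclause j (t + 1) (by omega) (by omega) (by omega)⟩
    · exact ⟨_, Sym2.mem_mk_left _ _, hclause j t (by omega) (by omega) htk⟩
  · by_cases hkk : k' = k j
    · have hl : (φ j).get ⟨k', hlen⟩ = (φ j).get (k j) := congrArg _ (Fin.ext hkk)
      refine ⟨litVertex ((φ j).get ⟨k', hlen⟩), Sym2.mem_mk_right _ _,
        hvar ((φ j).get (k j)).1 _ (litVertex_mem_varEdge_iff.2 ?_)⟩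
      rw [hl, hk]
    · exact ⟨_, Sym2.mem_mk_left _ _, hclause j (2 * k') hk' (by omega) (by omega)⟩

theorem exists_maximalMatching_of_satisfiable (hφ : ∀ j, (φ j).length ≤ 3)
    (hsat : ∀ j, ∃ l ∈ φ j, a l.1 = l.2) :
    ∃ M, IsMaximalMatchingF (satGraph φ) M ∧ ∀ e ∈ connEdges φ, e ∉ M := by
  have hocc : ∀ j, ∃ k : Fin (φ j).length, a ((φ j).get k).1 = ((φ j).get k).2 := by
    intro j
    obtain ⟨l, hl, hal⟩ := hsat j
    obtain ⟨k, rfl⟩ := List.get_of_mem hl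
    exact ⟨k, hal⟩
  choose k hk using hocc
  exact ⟨satMatching φ a k, isMaximalMatchingF_iff.2
    ⟨isMatchingF_satMatching, satMatching_covers hφ hk⟩, connEdges_notMem_satMatching⟩

variable {M : Finset (Sym2 (SatVertex n m))}

theorem IsMatchingF.varEdge_true_mem_iff {G : SimpleGraph (SatVertex n m)} (hM : IsMatchingF G M)
    (h : varEdge i b ∈ M) : varEdge i true ∈ M ↔ b = true := by
  refine ⟨fun htrue => ?_, by rintro rfl; exact h⟩
  by_contra hb
  have := hM.eq_of_mem_of_mem htrue h (Sym2.mem_mk_left _ _) (Sym2.mem_mk_left _ _)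
  simp [varEdge, litVertex, hb] at this

theorem IsMatchingF.eq_varEdge_of_litVertex_mem (hM : IsMatchingF (satGraph φ) M)
    (hO : ∀ e ∈ connEdges φ, e ∉ M) {l : Fin n × Bool} {f : Sym2 (SatVertex n m)} (hf : f ∈ M)
    (hl : litVertex l ∈ f) : f = varEdge l.1 l.2 := by
  rcases eq_varEdge_or_clauseEdge (hM.1 f hf) (fun h => hO f h hf) with ⟨i, b, rfl⟩ | ⟨j, t, rfl⟩
  · rw [litVertex_mem_varEdge_iff.1 hl]
  · exact absurd hl inl_notMem_clauseEdge

theorem IsMatchingF.exists_unmatched_occurrence (hM : IsMatchingF (satGraph φ) M)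
    (hO : ∀ e ∈ connEdges φ, e ∉ M) (j : Fin m) (hpos : 0 < (φ j).length)
    (hφ : (φ j).length ≤ 3) :
    ∃ (k : ℕ) (hk : 2 * k < 5) (_ : k < (φ j).length),
      ∀ f ∈ M, (Sum.inr (j, ⟨2 * k, hk⟩) : SatVertex n m) ∉ f := by
  let P t := ∃ ht : t < 4, clauseEdge j ⟨t, ht⟩ ∈ M
  have hlt : ∀ t, P t → t < 2 * ((φ j).length - 1) :=
    fun t ⟨_, ht⟩ => clauseEdge_mem_edgeSet_satGraph_iff.1 (hM.1 _ ht)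
  have hmatch : ∀ t, P t → ¬ P (t + 1) := by
    rintro t ⟨_, ht⟩ ⟨_, ht'⟩
    have := hM.eq_of_mem_of_mem ht ht' (Sym2.mem_mk_right _ _) (Sym2.mem_mk_left _ _)
    simpa using (clauseEdge_inj.1 this).2
  obtain ⟨k, hkN, hk⟩ := exists_even_unmatched_of_pathMatching hlt hmatch
  refine ⟨k, by omega, by omega, fun f hf hv => ?_⟩
  rcases eq_varEdge_or_clauseEdge (hM.1 f hf) (fun h => hO f h hf) with ⟨i, b, rfl⟩ | ⟨j', t, rfl⟩
  · exact inr_notMem_varEdge hv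
  · obtain ⟨rfl, hkt⟩ := inr_mem_clauseEdge_iff.1 hv
    have := hk t ⟨t.2, hf⟩
    simp only at hkt
    omega

theorem satisfiable_of_maximalMatching (hφ : ∀ j, 0 < (φ j).length ∧ (φ j).length ≤ 3)
    (hmax : IsMaximalMatchingF (satGraph φ) M) (hO : ∀ e ∈ connEdges φ, e ∉ M) :
    ∃ a : Fin n → Bool, ∀ j, ∃ l ∈ φ j, a l.1 = l.2 := by
  obtain ⟨hM, hcov⟩ := isMaximalMatchingF_iff.1 hmax
  refine ⟨fun i => decide (varEdge i true ∈ M), fun j => ?_⟩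
  obtain ⟨k, hk, hlen, hfree⟩ := hM.exists_unmatched_occurrence hO j (hφ j).1 (hφ j).2
  obtain ⟨v, hv, f, hf, hvf⟩ :=
    hcov _ (mem_edgeSet_satGraph_iff.2 (Or.inr (Or.inr ⟨j, k, hk, hlen, rfl⟩)))
  rcases Sym2.mem_iff.1 hv with rfl | rfl
  · exact absurd hvf (hfree f hf)
  · refine ⟨(φ j).get ⟨k, hlen⟩, List.get_mem _ _, ?_⟩
    rw [hM.eq_varEdge_of_litVertex_mem hO hf hvf] at hf
    rw [Bool.eq_iff_iff, decide_eq_true_iff]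
    exact hM.varEdge_true_mem_iff hf

end SatGraph

theorem stmt12 {n m : ℕ} (φ : Fin m → List (Fin n × Bool))
    (hwf : ∀ j : Fin m, (φ j).length = 2 ∨ (φ j).length = 3) :
    (∃ a : Fin n → Bool, ∀ j : Fin m, ∃ l ∈ φ j, a l.1 = l.2) ↔
      ∃ M : Finset (Sym2 (SatVertex n m)),
        IsMaximalMatchingF (satGraph φ) M ∧ ∀ e ∈ connEdges φ, e ∉ M := by
  have hφ : ∀ j, 0 < (φ j).length ∧ (φ j).length ≤ 3 := fun j => by
    rcases hwf j with h | h <;> omega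
  exact ⟨fun ⟨_, hsat⟩ => exists_maximalMatching_of_satisfiable (fun j => (hφ j).2) hsat,
    fun ⟨_, hmax, hO⟩ => satisfiable_of_maximalMatching hφ hmax hO⟩
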